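/- Let A be an associative unital ℂ-algebra, let a, q_1, …, q_n ∈ A with n ≥ 1, let i ≥ 1 be an integer, and let i_1, …, i_n ≥ 0 be integers. Then [a^{i_1} q_1 a^{i_2} q_2 ⋯ a^{i_n} q_n, a^i] − [a^{i_1 + i_2 + ⋯ + i_n} q_1 q_2 ⋯ q_n, a^i] lies in L_3(A); that is, [a^{i_1} q_1 a^{i_2} q_2 ⋯ a^{i_n} q_n, a^i] = [a^{Σ_k i_k} q_1 q_2 ⋯ q_n, a^i] holds in B_2(A) = L_2(A)/L_3(A). -/

import Mathlib

/-!
Write `x ≡ y` when `[x - y, c] ∈ L₃(A)`. If `b` commutes with `c`, then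
`u b v - b u v = u [b, v] + [u v, b]`; the second term lies in `L₂`, and
`[u [b, v], c] = [u, [b, v c]] + [[b, v], c u]` lies in `L₃` because `[b, v] c = [b, v c]`.
Hence `u b v ≡ b u v`: a factor commuting with `c` can be pulled to the front, and pulling
every `a^{i_k}` to the front of `a^{i_1} q_1 ⋯ a^{i_n} q_n` gives `a^{Σ i_k} q_1 ⋯ q_n`.
-/

noncomputable section

/-- Lower central series of an associative unital ℂ-algebra: `lcs A i` is `L_{i+1}(A)`,
so `lcs A 0 = L₁(A) = A` and `L_{i+2}(A)` is the ℂ-linear span of all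
`[a,u] = a*u - u*a` with `u ∈ L_{i+1}(A)`. -/
def lcs (A : Type*) [Ring A] [Algebra ℂ A] : ℕ → Submodule ℂ A
  | 0 => ⊤
  | n + 1 => Submodule.span ℂ {x | ∃ a u, u ∈ lcs A n ∧ x = a * u - u * a}

theorem List.prod_map_pow_eq_pow_sum {ι M : Type*} [Monoid M] (a : M) (e : ι → ℕ) (l : List ι) :
    (l.map fun k => a ^ e k).prod = a ^ (l.map e).sum := by
  induction l with
  | nil => simp
  | cons k l ih => simp [ih, pow_add]

theorem Finset.sum_Icc_eq_sum_range' {M : Type*} [AddCommMonoid M] (f : ℕ → M) (n : ℕ) :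
    ∑ k ∈ Finset.Icc 1 n, f k = ((List.range' 1 n).map f).sum := by
  simp [Finset.sum, Nat.Icc_eq_range']

namespace lcs

variable {A : Type*} [Ring A] [Algebra ℂ A]

theorem commutator_mem_succ (x : A) {u : A} {n : ℕ} (hu : u ∈ lcs A n) :
    x * u - u * x ∈ lcs A (n + 1) :=
  Submodule.subset_span ⟨x, u, hu, rfl⟩

theorem commutator_mem_one (x y : A) : x * y - y * x ∈ lcs A 1 :=
  commutator_mem_succ x (show y ∈ lcs A 0 from Submodule.mem_top)

theorem commutator_mem_succ' (x : A) {u : A} {n : ℕ} (hu : u ∈ lcs A n) :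
    u * x - x * u ∈ lcs A (n + 1) := by
  simpa using neg_mem (commutator_mem_succ x hu)

def centralizerModThree (c : A) : Submodule ℂ A :=
  (lcs A 2).comap (LinearMap.mulRight ℂ c - LinearMap.mulLeft ℂ c)

theorem mem_centralizerModThree {c x : A} :
    x ∈ centralizerModThree c ↔ x * c - c * x ∈ lcs A 2 :=
  Iff.rfl

theorem one_le_centralizerModThree (c : A) : lcs A 1 ≤ centralizerModThree c :=
  fun _ hx => commutator_mem_succ' c hx

theorem mul_commutator_mem_centralizerModThree {b c : A} (hbc : Commute b c) (u v : A) :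
    u * (b * v - v * b) ∈ centralizerModThree c := by
  have hbvc : (b * v - v * b) * c = b * (v * c) - v * c * b := by
    rw [sub_mul, mul_assoc, mul_assoc, mul_assoc, hbc.eq]
  have h₁ : u * ((b * v - v * b) * c) - (b * v - v * b) * c * u ∈ lcs A 2 :=
    commutator_mem_succ u (hbvc ▸ commutator_mem_one b (v * c))
  have h₂ : (b * v - v * b) * (c * u) - c * u * (b * v - v * b) ∈ lcs A 2 :=
    commutator_mem_succ' (c * u) (commutator_mem_one b v)
  rw [mem_centralizerModThree]
  convert add_mem h₁ h₂ using 1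
  noncomm_ring

theorem mul_mul_sub_mem_centralizerModThree {b c : A} (hbc : Commute b c) (u v : A) :
    u * b * v - b * (u * v) ∈ centralizerModThree c := by
  have h := add_mem (mul_commutator_mem_centralizerModThree hbc u v)
    (one_le_centralizerModThree c (commutator_mem_one (u * v) b))
  convert h using 1
  noncomm_ring

theorem list_prod_map_mul_sub_mem_centralizerModThree {ι : Type*} {c : A} (b q : ι → A)
    (l : List ι) (hbc : ∀ k ∈ l, Commute (b k) c) (u : A) :
    u * (l.map fun k => b k * q k).prod - (l.map b).prod * (u * (l.map q).prod)
      ∈ centralizerModThree c := by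
  induction l generalizing u with
  | nil => simp
  | cons k l ih =>
    have hk := hbc k List.mem_cons_self
    have hl := ih (fun j hj => hbc j (List.mem_cons_of_mem k hj)) (b k * u * q k)
    have h := add_mem (add_mem (mul_mul_sub_mem_centralizerModThree hk u
      (q k * (l.map fun k => b k * q k).prod)) hl)
      (mul_mul_sub_mem_centralizerModThree hk (l.map b).prod (u * q k * (l.map q).prod))
    convert h using 1
    simp only [List.map_cons, List.prod_cons]
    noncomm_ring

end lcs

open lcs in
theorem stmt11_general {A : Type*} [Ring A] [Algebra ℂ A] (n : ℕ)
    (a : A) (q : ℕ → A) (i : ℕ) (e : ℕ → ℕ) :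
    (((List.range' 1 n).map (fun k => a ^ e k * q k)).prod * a ^ i
        - a ^ i * ((List.range' 1 n).map (fun k => a ^ e k * q k)).prod)
      - ((a ^ (∑ k ∈ Finset.Icc 1 n, e k) * ((List.range' 1 n).map q).prod) * a ^ i
        - a ^ i * (a ^ (∑ k ∈ Finset.Icc 1 n, e k) * ((List.range' 1 n).map q).prod))
      ∈ lcs A 2 := by
  have h := list_prod_map_mul_sub_mem_centralizerModThree (c := a ^ i) (fun k => a ^ e k) q
    (List.range' 1 n) (fun k _ => Commute.pow_pow_self a (e k) i) 1
  rw [List.prod_map_pow_eq_pow_sum, mem_centralizerModThree] at h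
  rw [Finset.sum_Icc_eq_sum_range']
  convert h using 1
  noncomm_ring

/-- in an associative unital ℂ-algebra A, for a, q_1, …, q_n ∈ A (n ≥ 1),
i ≥ 1 and i_1, …, i_n ≥ 0, the element
[a^{i_1} q_1 a^{i_2} q_2 ⋯ a^{i_n} q_n, a^i] − [a^{i_1+⋯+i_n} q_1 q_2 ⋯ q_n, a^i]
lies in L₃(A); that is, the two brackets agree in B₂(A) = L₂(A)/L₃(A).
Here a^{i_1} q_1 ⋯ a^{i_n} q_n is the product over k = 1, …, n of a^{i_k}·q_k. -/
theorem stmt11 {A : Type*} [Ring A] [Algebra ℂ A] (n : ℕ) (hn : 1 ≤ n)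
    (a : A) (q : ℕ → A) (i : ℕ) (hi : 1 ≤ i) (e : ℕ → ℕ) :
    (((List.range' 1 n).map (fun k => a ^ e k * q k)).prod * a ^ i
        - a ^ i * ((List.range' 1 n).map (fun k => a ^ e k * q k)).prod)
      - ((a ^ (∑ k ∈ Finset.Icc 1 n, e k) * ((List.range' 1 n).map q).prod) * a ^ i
        - a ^ i * (a ^ (∑ k ∈ Finset.Icc 1 n, e k) * ((List.range' 1 n).map q).prod))
      ∈ lcs A 2 :=
  stmt11_general n a q i e
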